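/- arXiv:1811.11901 — 7 statements merged into one kernel-verified Lean document; each statement's English description precedes it below -/
import Mathlib

section
/- Define polynomials c_n(t) by c_0(t)=1, c_1(t)=1-2t², and c_{n+1}(t) = c_n(t) - t²·c_{n-1}(t) for n ≥ 1. Then c_{n-1}(t) = 2·t^n·T_n(t^{-1}/2) for all n ≥ 1, i.e., as polynomial identity: c_{n-1}(t) equals the polynomial 2^{1-n}·∑_{i=0}^{⌊n/2⌋} C(n,2i)·(1-4t²)^i. -/
open Polynomial Polynomial.Chebyshev Finset

/-- The polynomials `c_n` with `c_0 = 1`, `c_1 = 1 - 2t²`, `c_{n+1} = c_n - t² c_{n-1}`,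
arising as `det(I - t Aᵀ)` for the adjacency matrix of the Dynkin diagram `C_n`. -/
noncomputable def cpoly : ℕ → Polynomial ℝ
  | 0 => 1
  | 1 => 1 - 2 * X ^ 2
  | (n + 2) => cpoly (n + 1) - X ^ 2 * cpoly n

lemma pascal4 (n i : ℕ) :
    (n+2).choose (2*i+2) + n.choose (2*i+2) = 2 * ((n+1).choose (2*i+2)) + n.choose (2*i) := by
  have h1 : (n+2).choose (2*i+2) = (n+1).choose (2*i+1) + (n+1).choose (2*i+2) :=
    Nat.choose_succ_succ (n+1) (2*i+1)
  have h2 : (n+1).choose (2*i+2) = n.choose (2*i+1) + n.choose (2*i+2) :=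
    Nat.choose_succ_succ n (2*i+1)
  have h3 : (n+1).choose (2*i+1) = n.choose (2*i) + n.choose (2*i+1) :=
    Nat.choose_succ_succ n (2*i)
  omega

lemma sum_rec (n : ℕ) (w : ℝ) :
    (∑ i ∈ range (n+3), ((n+2).choose (2*i) : ℝ) * w^i)
      + (1 - w) * ∑ i ∈ range (n+3), (n.choose (2*i) : ℝ) * w^i
      = 2 * ∑ i ∈ range (n+3), ((n+1).choose (2*i) : ℝ) * w^i := by
  have expand : (1 - w) * ∑ i ∈ range (n+3), (n.choose (2*i) : ℝ) * w^i
      = (∑ i ∈ range (n+3), (n.choose (2*i) : ℝ) * w^i)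
        - ∑ i ∈ range (n+3), (n.choose (2*i) : ℝ) * w^(i+1) := by
    rw [Finset.mul_sum, ← Finset.sum_sub_distrib]
    apply Finset.sum_congr rfl
    intro i _
    ring
  rw [expand]
  have hlast : (∑ i ∈ range (n+3), (n.choose (2*i) : ℝ) * w^(i+1))
      = ∑ i ∈ range (n+2), (n.choose (2*i) : ℝ) * w^(i+1) := by
    rw [Finset.sum_range_succ]
    have : n.choose (2*(n+2)) = 0 := Nat.choose_eq_zero_of_lt (by omega)
    simp [this]
  rw [hlast]
  rw [Finset.sum_range_succ' (fun i => ((n+2).choose (2*i) : ℝ) * w^i) (n+2),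
      Finset.sum_range_succ' (fun i => ((n+1).choose (2*i) : ℝ) * w^i) (n+2),
      Finset.sum_range_succ' (fun i => ((n).choose (2*i) : ℝ) * w^i) (n+2)]
  simp only [Nat.choose_zero_right, pow_zero, Nat.cast_one, mul_one]
  have term : ∀ i ∈ range (n+2),
      ((n+2).choose (2*(i+1)) : ℝ) * w^(i+1) + ((n.choose (2*(i+1)) : ℝ) * w^(i+1)
        - (n.choose (2*i) : ℝ) * w^(i+1))
      = 2 * (((n+1).choose (2*(i+1)) : ℝ) * w^(i+1)) := by
    intro i _
    have h := pascal4 n i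
    have hc : ((n+2).choose (2*i+2) : ℝ) + (n.choose (2*i+2) : ℝ)
        = 2 * ((n+1).choose (2*i+2) : ℝ) + (n.choose (2*i) : ℝ) := by exact_mod_cast h
    have h2 : 2*(i+1) = 2*i+2 := by ring
    rw [h2]
    linear_combination w^(i+1) * hc
  have hsum := Finset.sum_congr rfl term
  rw [Finset.sum_add_distrib, Finset.sum_sub_distrib, ← Finset.mul_sum] at hsum
  simp only [Nat.mul_zero, Nat.choose_zero_right, Nat.cast_one]
  linarith [hsum]

noncomputable def qf (n : ℕ) (w : ℝ) : ℝ := ∑ i ∈ range (n+1), (n.choose (2*i) : ℝ) * w^i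

lemma qf_eq (n N : ℕ) (h : n + 1 ≤ N) (w : ℝ) :
    qf n w = ∑ i ∈ range N, (n.choose (2*i) : ℝ) * w^i := by
  apply Finset.sum_subset (Finset.range_subset_range.2 h)
  intro i hi hni
  simp only [Finset.mem_range] at hi hni
  have : n < 2*i := by omega
  simp [Nat.choose_eq_zero_of_lt this]

lemma qf_rec (n : ℕ) (w : ℝ) : qf (n+2) w = 2 * qf (n+1) w - (1-w) * qf n w := by
  rw [qf_eq (n+2) (n+3) (by omega), qf_eq (n+1) (n+3) (by omega), qf_eq n (n+3) (by omega)]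
  linarith [sum_rec n w]

noncomputable def Sf (n : ℕ) (t : ℝ) : ℝ :=
  (2 : ℝ) ^ ((1 : ℤ) - n) *
    ∑ i ∈ Finset.range (n / 2 + 1), (n.choose (2 * i) : ℝ) * (1 - 4 * t ^ 2) ^ i

lemma Sf_eq_qf (n : ℕ) (t : ℝ) : Sf n t = (2 : ℝ) ^ ((1 : ℤ) - n) * qf n (1 - 4*t^2) := by
  unfold Sf
  congr 1
  apply Finset.sum_subset (Finset.range_subset_range.2 (by omega))
  intro i hi hni
  simp only [Finset.mem_range] at hi hni
  have : n < 2*i := by omega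
  simp [Nat.choose_eq_zero_of_lt this]

lemma Sf_rec (n : ℕ) (t : ℝ) : Sf (n+2) t = Sf (n+1) t - t^2 * Sf n t := by
  rw [Sf_eq_qf, Sf_eq_qf, Sf_eq_qf, qf_rec]
  have h2 : (2:ℝ) ≠ 0 := by norm_num
  have e1 : ((1:ℤ) - (n+2:ℕ)) = (-(n:ℤ)) + (-1) := by push_cast; ring
  have e2 : ((1:ℤ) - (n+1:ℕ)) = (-(n:ℤ)) := by push_cast; ring
  have e3 : ((1:ℤ) - (n:ℕ)) = (-(n:ℤ)) + 1 := by push_cast; ring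
  rw [e1, e2, e3, zpow_add₀ h2, zpow_add₀ h2]
  have w4 : (1:ℝ) - (1 - 4*t^2) = 4*t^2 := by ring
  rw [w4]
  norm_num
  ring

lemma main_aux (n : ℕ) :
    ((∀ t : ℝ, t ≠ 0 →
        (cpoly n).eval t = 2 * t ^ (n+1) * (T ℝ (n+1)).eval (t⁻¹ / 2)) ∧
      ∀ t : ℝ, (cpoly n).eval t = Sf (n+1) t) ∧
    ((∀ t : ℝ, t ≠ 0 →
        (cpoly (n+1)).eval t = 2 * t ^ (n+2) * (T ℝ (n+2)).eval (t⁻¹ / 2)) ∧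
      ∀ t : ℝ, (cpoly (n+1)).eval t = Sf (n+2) t) := by
  induction n with
  | zero =>
    constructor
    · constructor
      · intro t ht
        simp only [cpoly]
        push_cast
        rw [T_one]
        simp
        field_simp
      · intro t
        simp only [cpoly, Sf]
        norm_num
    · constructor
      · intro t ht
        simp only [cpoly]
        push_cast
        rw [T_two]
        simp only [eval_sub, eval_mul, eval_ofNat, eval_pow, eval_X, eval_one, eval_sub,
          eval_add]
        field_simp
      · intro t
        simp only [cpoly, Sf]
        rw [show ((0:ℕ)+2)/2 + 1 = 2 by norm_num]
        rw [Finset.sum_range_succ, Finset.sum_range_one]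
        norm_num
        ring
  | succ k ih =>
    refine ⟨ih.2, ?_, ?_⟩
    · intro t ht
      have h1 := ih.1.1 t ht
      have h2 := ih.2.1 t ht
      show (cpoly (k+2)).eval t = _
      rw [show cpoly (k+2) = cpoly (k+1) - X ^ 2 * cpoly k from rfl]
      simp only [eval_sub, eval_mul, eval_pow, eval_X]
      rw [h1, h2]
      have hT : T ℝ ((k:ℤ)+1+2) = 2 * X * T ℝ ((k:ℤ)+1+1) - T ℝ ((k:ℤ)+1) := T_add_two ℝ ((k:ℤ)+1)
      push_cast
      rw [show (k:ℤ) + 1 + 1 = (k:ℤ) + 2 by ring] at hT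
      rw [hT]
      simp only [eval_sub, eval_mul, eval_ofNat, eval_X]
      field_simp
      ring
    · intro t
      have h1 := ih.1.2 t
      have h2 := ih.2.2 t
      show (cpoly (k+2)).eval t = _
      rw [show cpoly (k+2) = cpoly (k+1) - X ^ 2 * cpoly k from rfl]
      simp only [eval_sub, eval_mul, eval_pow, eval_X]
      rw [h1, h2, Sf_rec (k+1) t]

/-- `c_{n-1}(t) = 2 t^n T_n(t⁻¹/2)` for `t ≠ 0`, and as a polynomial identity
`c_{n-1}(t) = 2^{1-n} ∑_{i=0}^{⌊n/2⌋} C(n, 2i) (1 - 4t²)^i`, for all `n ≥ 1`. -/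
theorem cpoly_eq_chebyshevT (n : ℕ) (hn : 1 ≤ n) :
    (∀ t : ℝ, t ≠ 0 →
        (cpoly (n - 1)).eval t = 2 * t ^ n * (T ℝ n).eval (t⁻¹ / 2)) ∧
      ∀ t : ℝ,
        (cpoly (n - 1)).eval t =
          (2 : ℝ) ^ ((1 : ℤ) - n) *
            ∑ i ∈ Finset.range (n / 2 + 1),
              (n.choose (2 * i) : ℝ) * (1 - 4 * t ^ 2) ^ i := by
  obtain ⟨m, rfl⟩ : ∃ m, n = m + 1 := ⟨n - 1, by omega⟩
  simp only [Nat.add_sub_cancel]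
  have h := (main_aux m).1
  refine ⟨?_, ?_⟩
  · intro t ht
    have := h.1 t ht
    push_cast at this ⊢
    convert this using 3
  · intro t
    have := h.2 t
    rw [Sf] at this
    convert this using 2
end

section
/- With c_n(t) defined by c_0(t)=1, c_1(t)=1-2t², c_{n+1}(t)=c_n(t)-t²·c_{n-1}(t), one has the factorization c_{n-1}(t) = ∏_{i=1}^{n} (1 - 2cos((2i-1)π/(2n))·t) for all n ≥ 1. -/
/-!
Writing `C_n(x) = 2 T_n(x / 2)` for the Vieta–Lucas (rescaled Chebyshev) polynomial, the
recursions of `c` and `C` match after reversal: `c_{n-1}(t) = tⁿ C_n(1 / t)` for `t ≠ 0`.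
The roots of `T_n` are `cos((2k + 1)π / (2n))`, so `C_n` is the monic polynomial with roots
`2 cos((2k + 1)π / (2n))`, and reversing its factorization gives the claim.
-/

open Polynomial Real

theorem Polynomial.Chebyshev.T_real_eq_prod (n : ℕ) :
    T ℝ n = Polynomial.C (2 ^ (n - 1)) *
      ∏ k ∈ Finset.range n, (X - Polynomial.C (cos ((2 * k + 1) * π / (2 * n)))) := by
  have hroots : (T ℝ n).roots =
      (Multiset.range n).map fun k : ℕ ↦ cos ((2 * k + 1) * π / (2 * n)) := by
    rw [roots_T_real, Finset.image_val, Finset.range_val,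
      Multiset.dedup_eq_self.mpr (roots_T_real_nodup n)]
  have hcard : Multiset.card (T ℝ n).roots = (T ℝ n).natDegree := by simp [hroots]
  rw [← C_leadingCoeff_mul_prod_multiset_X_sub_C hcard, hroots, Multiset.map_map, leadingCoeff_T,
    Finset.prod_eq_multiset_prod, Finset.range_val]
  simp

theorem Polynomial.Chebyshev.C_real_eq_prod {n : ℕ} (hn : n ≠ 0) :
    C ℝ n = ∏ k ∈ Finset.range n, (X - Polynomial.C (2 * cos ((2 * k + 1) * π / (2 * n)))) := by
  refine Polynomial.funext fun x ↦ ?_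
  have h : eval (x / 2) ((C ℝ n).comp (2 * X)) = eval (x / 2) (2 * T ℝ n) := by
    rw [C_comp_two_mul_X]
  rw [eval_comp, T_real_eq_prod] at h
  simp only [eval_mul, eval_ofNat, eval_X, eval_C, eval_prod, eval_sub] at h
  rw [mul_div_cancel₀ x two_ne_zero] at h
  rw [h, eval_prod, ← mul_assoc, ← pow_succ',
    Nat.sub_add_cancel (Nat.one_le_iff_ne_zero.mpr hn)]
  nth_rw 1 [← Finset.card_range n]
  rw [Finset.pow_card_mul_prod]
  refine Finset.prod_congr rfl fun k _ ↦ ?_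
  simp only [eval_sub, eval_X, eval_C]
  ring

theorem eval_cpoly_zero : ∀ m, (cpoly m).eval 0 = 1
  | 0 => by simp [cpoly]
  | 1 => by simp [cpoly]
  | m + 2 => by simp [cpoly, eval_cpoly_zero (m + 1)]

theorem eval_cpoly {t : ℝ} (ht : t ≠ 0) :
    ∀ m : ℕ, (cpoly m).eval t = t ^ (m + 1) * (Chebyshev.C ℝ (m + 1 : ℕ)).eval t⁻¹
  | 0 => by simp [cpoly, ht]
  | 1 => by
    simp only [cpoly, eval_sub, eval_one, eval_mul, eval_ofNat, eval_pow, eval_X, Nat.reduceAdd,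
      Nat.cast_ofNat, Chebyshev.C_two, inv_pow]
    field_simp
  | m + 2 => by
    rw [show ((m + 2 + 1 : ℕ) : ℤ) = (m + 1 : ℕ) + 2 by push_cast; ring, Chebyshev.C_add_two]
    simp only [cpoly, eval_sub, eval_mul, eval_pow, eval_X, eval_cpoly ht (m + 1), eval_cpoly ht m]
    push_cast
    field_simp
    ring

theorem cpoly_eq_prod_general (n : ℕ) (t : ℝ) :
    (cpoly (n - 1)).eval t =
      ∏ i ∈ Finset.Icc 1 n, (1 - 2 * Real.cos ((2 * i - 1) * Real.pi / (2 * n)) * t) := by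
  rcases n with _ | n
  · simp [cpoly]
  rw [← Finset.Ico_add_one_right_eq_Icc, Finset.prod_Ico_eq_prod_range, Nat.add_sub_cancel,
    Nat.add_sub_cancel]
  rcases eq_or_ne t 0 with rfl | ht
  · simp [eval_cpoly_zero]
  rw [eval_cpoly ht, Chebyshev.C_real_eq_prod n.succ_ne_zero, eval_prod]
  nth_rw 1 [← Finset.card_range (n + 1)]
  rw [Finset.pow_card_mul_prod]
  refine Finset.prod_congr rfl fun k _ ↦ ?_
  rw [eval_sub, eval_X, eval_C, show 2 * ((1 + k : ℕ) : ℝ) - 1 = 2 * k + 1 by push_cast; ring]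
  field_simp

/-- `c_{n-1}(t) = ∏_{i=1}^n (1 - 2 cos((2i-1)π/(2n)) t)` for all `n ≥ 1`. -/
theorem cpoly_eq_prod (n : ℕ) (hn : 1 ≤ n) (t : ℝ) :
    (cpoly (n - 1)).eval t =
      ∏ i ∈ Finset.Icc 1 n, (1 - 2 * Real.cos ((2 * i - 1) * Real.pi / (2 * n)) * t) :=
  cpoly_eq_prod_general n t
end

section
/- With c_n(t) as above (c_0=1, c_1=1-2t², c_{n+1}=c_n - t²c_{n-1}), for n ≥ 3 the polynomial c_{n-1}(t) - t²·c_{n-3}(t) equals (1-4t²)·∑_{i=0}^{⌊(n-2)/2⌋} (-1)^i·C(n-2-i, i)·t^{2i}. -/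
open Polynomial

/-- The Fibonacci-like sum `∑ (-1)^i C(m-i,i) t^{2i}`. -/
noncomputable def Saux (t : ℝ) (m : ℕ) : ℝ :=
  ∑ i ∈ Finset.range (m / 2 + 1), (-1 : ℝ) ^ i * ((m - i).choose i : ℝ) * t ^ (2 * i)

lemma Saux_eq (t : ℝ) (m N : ℕ) (hN : m / 2 + 1 ≤ N) :
    Saux t m = ∑ i ∈ Finset.range N, (-1 : ℝ) ^ i * ((m - i).choose i : ℝ) * t ^ (2 * i) := by
  rw [Saux, Finset.sum_subset (Finset.range_subset_range.2 hN)]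
  intro i hi hni
  simp only [Finset.mem_range, not_lt] at hni
  have : (m - i).choose i = 0 := Nat.choose_eq_zero_of_lt (by omega)
  simp [this]

lemma Saux_rec (t : ℝ) (m : ℕ) : Saux t (m + 2) = Saux t (m + 1) - t ^ 2 * Saux t m := by
  rw [Saux_eq t (m + 2) (m / 2 + 2) (by omega), Saux_eq t (m + 1) (m / 2 + 2) (by omega),
    Saux_eq t m (m / 2 + 1) le_rfl]
  rw [Finset.sum_range_succ' _ (m / 2 + 1), Finset.sum_range_succ' _ (m / 2 + 1)]
  have h : ∀ j ∈ Finset.range (m / 2 + 1),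
      (-1 : ℝ) ^ (j + 1) * ((m + 2 - (j + 1)).choose (j + 1) : ℝ) * t ^ (2 * (j + 1)) =
      (-1 : ℝ) ^ (j + 1) * ((m + 1 - (j + 1)).choose (j + 1) : ℝ) * t ^ (2 * (j + 1))
        - t ^ 2 * ((-1 : ℝ) ^ j * ((m - j).choose j : ℝ) * t ^ (2 * j)) := by
    intro j hj
    simp only [Finset.mem_range] at hj
    have h1 : m + 2 - (j + 1) = (m - j) + 1 := by omega
    have h2 : m + 1 - (j + 1) = m - j := by omega
    rw [h1, h2, Nat.choose_succ_succ]
    push_cast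
    ring
  rw [Finset.sum_congr rfl h, Finset.sum_sub_distrib]
  simp [pow_succ, mul_add, Finset.mul_sum]
  ring

lemma cpoly_key (t : ℝ) (k : ℕ) :
    (cpoly (k + 2)).eval t - t ^ 2 * (cpoly k).eval t = (1 - 4 * t ^ 2) * Saux t (k + 1) := by
  induction k using Nat.twoStepInduction with
  | zero =>
    simp [cpoly, Saux]
    ring
  | one =>
    show (cpoly 3).eval t - t ^ 2 * (cpoly 1).eval t = (1 - 4 * t ^ 2) * Saux t 2
    have : Saux t 2 = 1 - t ^ 2 := by
      simp [Saux, Finset.sum_range_succ]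
      ring
    rw [this]
    simp [cpoly]
    ring
  | more k ih1 ih2 =>
    show (cpoly (k + 4)).eval t - t ^ 2 * (cpoly (k + 2)).eval t
      = (1 - 4 * t ^ 2) * Saux t (k + 3)
    have h4 : cpoly (k + 4) = cpoly (k + 3) - X ^ 2 * cpoly (k + 2) := rfl
    have h2 : cpoly (k + 2) = cpoly (k + 1) - X ^ 2 * cpoly k := rfl
    rw [Saux_rec]
    have e4 : (cpoly (k + 4)).eval t = (cpoly (k + 3)).eval t - t ^ 2 * (cpoly (k + 2)).eval t := by
      rw [h4]; simp
    have e2 : (cpoly (k + 2)).eval t = (cpoly (k + 1)).eval t - t ^ 2 * (cpoly k).eval t := by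
      rw [h2]; simp
    rw [e4, e2]
    linear_combination ih2 - t ^ 2 * ih1 + t ^ 2 * e2

/-- For `n ≥ 3`, `c_{n-1}(t) - t² c_{n-3}(t)
  = (1 - 4t²) ∑_{i=0}^{⌊(n-2)/2⌋} (-1)^i C(n-2-i, i) t^{2i}`. -/
theorem cpoly_det_twisted_A (n : ℕ) (hn : 3 ≤ n) (t : ℝ) :
    (cpoly (n - 1)).eval t - t ^ 2 * (cpoly (n - 3)).eval t =
      (1 - 4 * t ^ 2) *
        ∑ i ∈ Finset.range ((n - 2) / 2 + 1),
          (-1 : ℝ) ^ i * ((n - 2 - i).choose i : ℝ) * t ^ (2 * i) := by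
  obtain ⟨k, rfl⟩ : ∃ k, n = k + 3 := ⟨n - 3, by omega⟩
  have h1 : k + 3 - 1 = k + 2 := by omega
  have h2 : k + 3 - 3 = k := by omega
  have h3 : k + 3 - 2 = k + 1 := by omega
  rw [h1, h2, h3, ← Saux]
  exact cpoly_key t k
end

section
/- With c_n(t) as above (c_0=1, c_1=1-2t², c_{n+1}=c_n - t²c_{n-1}), for n ≥ 2 the polynomial c_{n-1}(t) - 2t²·c_{n-2}(t) equals (1-4t²)·∑_{i=0}^{⌊(n-1)/2⌋} (-1)^i·C(n-1-i,i)·t^{2i}. -/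
open Polynomial

noncomputable def Tsum (m : ℕ) (t : ℝ) : ℝ :=
  ∑ i ∈ Finset.range (m + 1), (-1 : ℝ) ^ i * ((m - i).choose i : ℝ) * t ^ (2 * i)

lemma choose_key (m i : ℕ) : (m + 2 - (i + 1)).choose (i + 1) =
    (m - i).choose (i + 1) + (m - i).choose i := by
  rcases Nat.lt_or_ge i (m + 1) with h | h
  · have h1 : m + 2 - (i + 1) = (m - i) + 1 := by omega
    rw [h1, Nat.choose_succ_succ, add_comm]
  · rw [Nat.choose_eq_zero_of_lt (by omega), show m - i = 0 by omega,
      Nat.choose_eq_zero_of_lt (by omega), Nat.choose_eq_zero_of_lt (by omega)]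

lemma Tsum_peel (m : ℕ) (t : ℝ) : Tsum (m + 1) t =
    (∑ i ∈ Finset.range (m + 1),
      (-1 : ℝ) ^ (i + 1) * ((m - i).choose (i + 1) : ℝ) * t ^ (2 * (i + 1))) + 1 := by
  unfold Tsum
  rw [Finset.sum_range_succ']
  congr 1
  · refine Finset.sum_congr rfl fun i _ => ?_
    rw [show m + 1 - (i + 1) = m - i from by omega]
  · simp

lemma Tsum_rec (m : ℕ) (t : ℝ) : Tsum (m + 2) t = Tsum (m + 1) t - t ^ 2 * Tsum m t := by
  have lhs : Tsum (m + 2) t =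
      ((∑ i ∈ Finset.range (m + 1),
        (-1 : ℝ) ^ (i + 1) * ((m - i).choose (i + 1) : ℝ) * t ^ (2 * (i + 1))) +
        (-t ^ 2) * Tsum m t) + 1 := by
    unfold Tsum
    rw [Finset.sum_range_succ']
    have congr1 : ∀ i ∈ Finset.range (m + 2),
        (-1 : ℝ) ^ (i + 1) * ((m + 2 - (i + 1)).choose (i + 1) : ℝ) * t ^ (2 * (i + 1)) =
        (-1 : ℝ) ^ (i + 1) * ((m - i).choose (i + 1) : ℝ) * t ^ (2 * (i + 1)) +
        (-t ^ 2) * ((-1 : ℝ) ^ i * ((m - i).choose i : ℝ) * t ^ (2 * i)) := by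
      intro i _
      rw [choose_key]
      push_cast
      ring
    rw [Finset.sum_congr rfl congr1, Finset.sum_add_distrib, ← Finset.mul_sum]
    have z1 : (m - (m + 1)).choose (m + 2) = 0 := by
      rw [show m - (m + 1) = 0 by omega]; exact Nat.choose_eq_zero_of_lt (by omega)
    have z2 : (m - (m + 1)).choose (m + 1) = 0 := by
      rw [show m - (m + 1) = 0 by omega]; exact Nat.choose_eq_zero_of_lt (by omega)
    rw [Finset.sum_range_succ, Finset.sum_range_succ (n := m + 1)
      (f := fun i => (-1 : ℝ) ^ i * ((m - i).choose i : ℝ) * t ^ (2 * i)), z1, z2]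
    simp
  rw [lhs, Tsum_peel]
  ring

lemma Ssum_eq_Tsum (m : ℕ) (t : ℝ) :
    ∑ i ∈ Finset.range (m / 2 + 1), (-1 : ℝ) ^ i * ((m - i).choose i : ℝ) * t ^ (2 * i) =
    Tsum m t := by
  unfold Tsum
  refine Finset.sum_subset ?_ ?_
  · intro i hi
    simp only [Finset.mem_range] at *
    omega
  · intro i _ hi
    simp only [Finset.mem_range] at hi
    rw [Nat.choose_eq_zero_of_lt (by omega)]
    simp

lemma main_aux_s9 (t : ℝ) : ∀ m : ℕ,
    (cpoly (m + 1)).eval t - 2 * t ^ 2 * (cpoly m).eval t = (1 - 4 * t ^ 2) * Tsum (m + 1) t := by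
  have key : ∀ m : ℕ,
      ((cpoly (m + 1)).eval t - 2 * t ^ 2 * (cpoly m).eval t
        = (1 - 4 * t ^ 2) * Tsum (m + 1) t) ∧
      ((cpoly (m + 2)).eval t - 2 * t ^ 2 * (cpoly (m + 1)).eval t
        = (1 - 4 * t ^ 2) * Tsum (m + 2) t) := by
    intro m
    induction m with
    | zero =>
      constructor
      · simp [cpoly, Tsum, Finset.sum_range_succ]
        ring
      · rw [show cpoly 2 = cpoly 1 - X ^ 2 * cpoly 0 from rfl]
        simp [cpoly, Tsum, Finset.sum_range_succ]
        ring
    | succ k ih =>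
      refine ⟨ih.2, ?_⟩
      rw [show cpoly (k + 3) = cpoly (k + 2) - X ^ 2 * cpoly (k + 1) from rfl,
        show cpoly (k + 2) = cpoly (k + 1) - X ^ 2 * cpoly k from rfl] at *
      rw [Tsum_rec (k + 1)]
      simp only [eval_sub, eval_mul, eval_pow, eval_X] at *
      nlinarith [ih.1, ih.2]
  exact fun m => (key m).1

/-- For `n ≥ 2`, `c_{n-1}(t) - 2t² c_{n-2}(t)
  = (1 - 4t²) ∑_{i=0}^{⌊(n-1)/2⌋} (-1)^i C(n-1-i, i) t^{2i}`. -/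
theorem cpoly_det_twisted_D (n : ℕ) (hn : 2 ≤ n) (t : ℝ) :
    (cpoly (n - 1)).eval t - 2 * t ^ 2 * (cpoly (n - 2)).eval t =
      (1 - 4 * t ^ 2) *
        ∑ i ∈ Finset.range ((n - 1) / 2 + 1),
          (-1 : ℝ) ^ i * ((n - 1 - i).choose i : ℝ) * t ^ (2 * i) := by
  obtain ⟨m, rfl⟩ : ∃ m, n = m + 2 := ⟨n - 2, by omega⟩
  have h1 : m + 2 - 1 = m + 1 := by omega
  have h2 : m + 2 - 2 = m := by omega
  rw [h1, h2]
  rw [Ssum_eq_Tsum (m + 1) t]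
  exact main_aux_s9 t m
end

section
/- The formal power series identity (1-4t²)·∑_{i=0}^{⌊(n-2)/2⌋}(-1)^i·C(n-2-i,i)·t^{2i} = (1-4t²)·∏_{i=1}^{n-2}(1 - 2cos(iπ/(n-1))·t) holds for n ≥ 3; that is, ∑_{i=0}^{⌊(n-2)/2⌋}(-1)^i·C(n-2-i,i)·t^{2i} = ∏_{i=1}^{n-2}(1 - 2cos(iπ/(n-1))·t). -/
/-!
Write `S_m(t) = ∑_{i+j=m} (-1)^i C(j,i) t^{2i}`. Pascal's rule gives `S_{m+2} = S_{m+1} - t² S_m`,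
which is also the recurrence satisfied by `t^m U_m(x)` when `2xt = 1`; hence
`S_m(t) = t^m U_m(1/(2t))`. The roots of `U_m` are `cos(kπ/(m+1))`, `1 ≤ k ≤ m`, and its leading
coefficient is `2^m`, so `t^m U_m(1/(2t)) = ∏_k (1 - 2 cos(kπ/(m+1)) t)`.
-/

open Real Finset Polynomial Polynomial.Chebyshev

noncomputable def altChooseSum {R : Type*} [CommRing R] (m : ℕ) (t : R) : R :=
  ∑ p ∈ antidiagonal m, (-1) ^ p.1 * (p.2.choose p.1 : R) * t ^ (2 * p.1)

section altChooseSum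

variable {R : Type*} [CommRing R]

theorem altChooseSum_zero (t : R) : altChooseSum 0 t = 1 := by
  simp [altChooseSum]

theorem altChooseSum_one (t : R) : altChooseSum 1 t = 1 := by
  simp [altChooseSum, Nat.sum_antidiagonal_succ]

theorem altChooseSum_add_two (m : ℕ) (t : R) :
    altChooseSum (m + 2) t = altChooseSum (m + 1) t - t ^ 2 * altChooseSum m t := by
  rw [altChooseSum, Nat.antidiagonal_succ_succ', sum_cons, sum_cons, sum_map, altChooseSum,
    Nat.sum_antidiagonal_succ, altChooseSum, mul_sum, add_sub_assoc, ← sum_sub_distrib]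
  simp only [Nat.choose_zero_succ, Nat.cast_zero, mul_zero, zero_mul, zero_add]
  congr 1
  refine sum_congr rfl fun p _ => ?_
  simp only [Function.Embedding.prodMap, Function.Embedding.coeFn_mk, Prod.map,
    Nat.succ_eq_add_one, Nat.choose_succ_succ]
  push_cast
  ring

theorem altChooseSum_eq_sum_range (m : ℕ) (t : R) :
    altChooseSum m t =
      ∑ i ∈ range (m / 2 + 1), (-1) ^ i * ((m - i).choose i : R) * t ^ (2 * i) := by
  rw [altChooseSum,
    Nat.sum_antidiagonal_eq_sum_range_succ (fun i j => (-1) ^ i * (j.choose i : R) * t ^ (2 * i))]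
  refine (sum_subset (fun i => by simp only [mem_range]; omega) fun i _ hi => ?_).symm
  simp only [mem_range, not_lt] at hi
  simp [Nat.choose_eq_zero_of_lt (by omega : m - i < i)]

theorem pow_mul_eval_U_eq_altChooseSum {x t : R} (h : 2 * x * t = 1) (m : ℕ) :
    t ^ m * (U R m).eval x = altChooseSum m t := by
  induction m using Nat.twoStepInduction with
  | zero => simp [altChooseSum_zero]
  | one => simp [altChooseSum_one, ← h]; ring
  | more m ih₀ ih₁ =>
    rw [altChooseSum_add_two, ← ih₀, ← ih₁]
    push_cast
    simp only [U_add_two, eval_sub, eval_mul, eval_ofNat, eval_X]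
    linear_combination (t ^ (m + 1) * (U R (m + 1)).eval x) * h

end altChooseSum

namespace Polynomial.Chebyshev

theorem U_real_eq_C_mul_prod (m : ℕ) :
    U ℝ m =
      Polynomial.C (2 ^ m) * ∏ k ∈ range m, (X - Polynomial.C (cos ((k + 1) * π / (m + 1)))) := by
  have hroots :
      (U ℝ m).roots = (range m).val.map fun k : ℕ => cos ((k + 1) * π / (m + 1)) := by
    rw [roots_U_real, image_val]
    exact Multiset.dedup_eq_self.mpr (roots_U_real_nodup m)
  have hsplit : Multiset.card (U ℝ m).roots = (U ℝ m).natDegree := by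
    rw [hroots, natDegree_U_natCast, Multiset.card_map, card_val, card_range]
  conv_lhs => rw [← C_leadingCoeff_mul_prod_multiset_X_sub_C hsplit]
  rw [leadingCoeff_U_natCast, hroots, Multiset.map_map]
  rfl

theorem pow_mul_eval_U_real_inv_two_mul {t : ℝ} (ht : t ≠ 0) (m : ℕ) :
    t ^ m * (U ℝ m).eval (2 * t)⁻¹ = ∏ k ∈ Icc 1 m, (1 - 2 * cos (k * π / (m + 1)) * t) := by
  rw [U_real_eq_C_mul_prod, eval_mul, eval_C, eval_prod, ← mul_assoc, ← mul_pow,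
    pow_eq_prod_const, ← prod_mul_distrib, ← Ico_add_one_right_eq_Icc, prod_Ico_eq_prod_range,
    Nat.add_sub_cancel]
  refine prod_congr rfl fun k _ => ?_
  rw [add_comm 1 k, Nat.cast_add_one, eval_sub, eval_X, eval_C]
  field_simp

end Polynomial.Chebyshev

/-- For `n ≥ 3`,
`∑_{i=0}^{⌊(n-2)/2⌋} (-1)^i C(n-2-i, i) t^{2i} = ∏_{i=1}^{n-2} (1 - 2 cos(iπ/(n-1)) t)`. -/
theorem sum_eq_prod_cos (n : ℕ) (hn : 3 ≤ n) (t : ℝ) :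
    (∑ i ∈ Finset.range ((n - 2) / 2 + 1),
        (-1 : ℝ) ^ i * ((n - 2 - i).choose i : ℝ) * t ^ (2 * i)) =
      ∏ i ∈ Finset.Icc 1 (n - 2), (1 - 2 * Real.cos (i * Real.pi / (n - 1)) * t) := by
  obtain ⟨m, rfl⟩ : ∃ m, n = m + 2 := ⟨n - 2, by omega⟩
  have hcast : ((m + 2 : ℕ) : ℝ) - 1 = m + 1 := by push_cast; ring
  rw [Nat.add_sub_cancel, hcast]
  rcases eq_or_ne t 0 with rfl | ht
  · simp [sum_range_succ']
  rw [← altChooseSum_eq_sum_range,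
    ← pow_mul_eval_U_eq_altChooseSum (x := (2 * t)⁻¹) (by field_simp),
    pow_mul_eval_U_real_inv_two_mul ht]
end

section
/- In the formal power series ring ℚ[[t]], (1 - 4t² + t⁴)/(1 - 5t² + 4t⁴) = (1 - 4cos²(π/12)t²)(1 - 4cos²(5π/12)t²)/((1-2t)(1+2t)(1-t)(1+t)), and its power series coefficients begin 1 + t² + 2t⁴ + 6t⁶ + 22t⁸ + 86t^{10} + ⋯. -/
/-!
Since `4 cos²(π/12) = 2 + √3` and `4 cos²(5π/12) = 2 - √3` have sum `4` and product `1`, the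
numerator factors as `1 - 4t² + t⁴`, and the rational identity is polynomial algebra. For the
coefficients, partial fractions in `s = t²` give
`(1 - 4s + s²) / ((1 - 4s)(1 - s)) = 1/4 + (1/12) / (1 - 4s) + (2/3) / (1 - s)`,
so the coefficient of `t²ⁿ` is `(4ⁿ + 8) / 12` for `n ≥ 1`, and the odd coefficients vanish.
-/

open PowerSeries Real

theorem four_mul_cos_pi_div_twelve_sq : 4 * cos (π / 12) ^ 2 = 2 + √3 := by
  rw [cos_sq, show 2 * (π / 12) = π / 6 by ring, cos_pi_div_six]
  ring

theorem four_mul_cos_five_pi_div_twelve_sq : 4 * cos (5 * π / 12) ^ 2 = 2 - √3 := by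
  rw [cos_sq, show 2 * (5 * π / 12) = π - π / 6 by ring, cos_pi_sub, cos_pi_div_six]
  ring

theorem one_sub_four_cos_sq_mul_one_sub_four_cos_sq (t : ℝ) :
    (1 - 4 * cos (π / 12) ^ 2 * t ^ 2) * (1 - 4 * cos (5 * π / 12) ^ 2 * t ^ 2) =
      1 - 4 * t ^ 2 + t ^ 4 := by
  rw [four_mul_cos_pi_div_twelve_sq, four_mul_cos_five_pi_div_twelve_sq]
  linear_combination (-t ^ 4) * sq_sqrt (show (0 : ℝ) ≤ 3 by norm_num)

namespace PowerSeries

section EvenGeom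

variable {R : Type*} [CommRing R]

/-- The expansion of `1 / (1 - a X²)`. -/
noncomputable def evenGeom (a : R) : R⟦X⟧ :=
  mk fun n => if Even n then a ^ (n / 2) else 0

theorem coeff_evenGeom (a : R) (n : ℕ) :
    coeff n (evenGeom a) = if Even n then a ^ (n / 2) else 0 :=
  coeff_mk _ _

theorem one_sub_C_mul_X_sq_mul_evenGeom (a : R) : (1 - C a * X ^ 2) * evenGeom a = 1 := by
  ext n
  rw [sub_mul, one_mul, mul_assoc, map_sub, coeff_C_mul, coeff_X_pow_mul', coeff_one]
  match n with
  | 0 => simp [coeff_evenGeom]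
  | 1 => simp [coeff_evenGeom]
  | n + 2 =>
    have hdiv : (n + 2) / 2 = n / 2 + 1 := by omega
    have heven : Even (n + 2) ↔ Even n := by simp [parity_simps]
    rw [if_pos (by omega), if_neg (by omega), Nat.add_sub_cancel, coeff_evenGeom,
      coeff_evenGeom, hdiv]
    simp only [heven]
    split_ifs <;> ring

end EvenGeom

theorem poincareSeries_eq_partialFractions :
    (1 - 4 * X ^ 2 + X ^ 4 : ℚ⟦X⟧) * (1 - 5 * X ^ 2 + 4 * X ^ 4)⁻¹ =
      C (1 / 4) + C (1 / 12) * evenGeom 4 + C (2 / 3) * evenGeom 1 := by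
  rw [eq_comm, eq_mul_inv_iff_mul_eq (by simp)]
  have h4 := one_sub_C_mul_X_sq_mul_evenGeom (4 : ℚ)
  have h1 := one_sub_C_mul_X_sq_mul_evenGeom (1 : ℚ)
  have e0 := congrArg C (show (1 / 4 + 1 / 12 + 2 / 3 : ℚ) = 1 by norm_num)
  have e2 := congrArg C (show (1 / 4 * 5 + 1 / 12 + 2 / 3 * 4 : ℚ) = 4 by norm_num)
  have e4 := congrArg C (show (1 / 4 * 4 : ℚ) = 1 by norm_num)
  simp only [map_add, map_mul, map_one, map_ofNat] at h4 h1 e0 e2 e4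
  linear_combination (C (1 / 12) * (1 - X ^ 2)) * h4 + (C (2 / 3) * (1 - 4 * X ^ 2)) * h1 +
    e0 - X ^ 2 * e2 + X ^ 4 * e4

theorem coeff_poincareSeries (n : ℕ) :
    coeff n ((1 - 4 * X ^ 2 + X ^ 4 : ℚ⟦X⟧) * (1 - 5 * X ^ 2 + 4 * X ^ 4)⁻¹) =
      (if n = 0 then 1 / 4 else 0) + if Even n then (4 ^ (n / 2) + 8) / 12 else 0 := by
  rw [poincareSeries_eq_partialFractions]
  simp only [map_add, coeff_C, coeff_C_mul, coeff_evenGeom, one_pow]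
  split_ifs <;> ring

end PowerSeries

/-- The Poincaré series for the `T`-invariants in `T(ℂ²)` coming from the pair `(O, T)`:
the rational function identity
`(1 - 4t² + t⁴)/(1 - 5t² + 4t⁴)
  = (1 - 4cos²(π/12)t²)(1 - 4cos²(5π/12)t²)/((1-2t)(1+2t)(1-t)(1+t))`
together with the first power-series coefficients `1 + t² + 2t⁴ + 6t⁶ + 22t⁸ + 86t¹⁰ + ⋯`. -/
theorem poincare_series_O_T :
    (∀ t : ℝ,
        (1 - 4 * Real.cos (Real.pi / 12) ^ 2 * t ^ 2) *
            (1 - 4 * Real.cos (5 * Real.pi / 12) ^ 2 * t ^ 2) *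
            (1 - 5 * t ^ 2 + 4 * t ^ 4) =
          (1 - 4 * t ^ 2 + t ^ 4) * ((1 - 2 * t) * (1 + 2 * t) * (1 - t) * (1 + t))) ∧
      (let f : PowerSeries ℚ :=
          (1 - 4 * (PowerSeries.X : PowerSeries ℚ) ^ 2 + PowerSeries.X ^ 4) *
            (1 - 5 * PowerSeries.X ^ 2 + 4 * PowerSeries.X ^ 4)⁻¹
       PowerSeries.coeff (R := ℚ) 0 f = 1 ∧ PowerSeries.coeff (R := ℚ) 1 f = 0 ∧
         PowerSeries.coeff (R := ℚ) 2 f = 1 ∧ PowerSeries.coeff (R := ℚ) 3 f = 0 ∧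
         PowerSeries.coeff (R := ℚ) 4 f = 2 ∧ PowerSeries.coeff (R := ℚ) 5 f = 0 ∧
         PowerSeries.coeff (R := ℚ) 6 f = 6 ∧ PowerSeries.coeff (R := ℚ) 7 f = 0 ∧
         PowerSeries.coeff (R := ℚ) 8 f = 22 ∧ PowerSeries.coeff (R := ℚ) 9 f = 0 ∧
         PowerSeries.coeff (R := ℚ) 10 f = 86) := by
  refine ⟨fun t => ?_, ?_⟩
  · rw [one_sub_four_cos_sq_mul_one_sub_four_cos_sq]
    ring
  · norm_num [coeff_poincareSeries, Nat.even_iff]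
end

section
/- Let N be a normal subgroup of a finite group G, and let φ, ψ be irreducible complex characters of N. Then the induced characters Ind_N^G φ and Ind_N^G ψ are equal if and only if φ and ψ are G-conjugate (i.e., ψ(n) = φ(g n g⁻¹) for some g ∈ G and all n ∈ N). -/
/-!
Restricted to `N`, the induced character is `Ind φ (n) = |N|⁻¹ ∑_{x ∈ G} φˣ(n)` with
`φˣ = φ ∘ (n ↦ x n x⁻¹)`, and each `φˣ` is again irreducible, being the character of the
representation restricted along an automorphism of `N`. Pairing with `ψ` and using the
orthonormality of irreducible characters, `⟨Res Ind φ, ψ⟩` counts the `x` with `φˣ = ψ`.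
For `φ := ψ` the count is positive (`x = 1`), so `Ind φ = Ind ψ` forces some `φˣ = ψ`.
Conversely, `Ind (φˣ) = Ind φ` by reindexing the defining sum.
-/

open CategoryTheory

/-- The induced character `Ind_N^G φ` of a class function `φ` of a subgroup `N ≤ G`. -/
noncomputable def inducedChar {G : Type} [Group G] [Fintype G] (N : Subgroup G)
    [DecidablePred fun g => g ∈ N] (φ : ↥N → ℂ) : G → ℂ :=
  fun g => (Fintype.card N : ℂ)⁻¹ *
    ∑ x : G, if h : x⁻¹ * g * x ∈ N then φ ⟨x⁻¹ * g * x, h⟩ else 0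

open scoped Finset

def IsIrreducibleCharacter {H : Type*} [Group H] (χ : H → ℂ) : Prop :=
  ∃ V : FDRep ℂ H, Simple V ∧ V.character = χ

namespace IsIrreducibleCharacter

variable {H K : Type*} [Group H] [Group K] {χ ψ : H → ℂ}

theorem comp_mulEquiv (hχ : IsIrreducibleCharacter χ) (e : K ≃* H) :
    IsIrreducibleCharacter (χ ∘ e) := by
  obtain ⟨V, hV, rfl⟩ := hχ
  exact ⟨(Action.resEquiv _ e).functor.obj V, simple_obj _ V, rfl⟩

theorem sum_mul_inv [Fintype H] (hχ : IsIrreducibleCharacter χ)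
    (hψ : IsIrreducibleCharacter ψ) :
    ∑ h, χ h * ψ h⁻¹ = if χ = ψ then (Fintype.card H : ℂ) else 0 := by
  obtain ⟨V, hV, rfl⟩ := hχ
  obtain ⟨W, hW, rfl⟩ := hψ
  classical
  have orth (U U' : FDRep ℂ H) [Simple U] [Simple U'] :
      ∑ h, U.character h * U'.character h⁻¹ =
        if Nonempty (U ≅ U') then (Fintype.card H : ℂ) else 0 := by
    have := FDRep.char_orthonormal U U'
    rw [Nat.card_eq_fintype_card, inv_mul_eq_iff_eq_mul₀ (by simp)] at this
    simpa using this
  have iso_iff : Nonempty (V ≅ W) ↔ V.character = W.character := by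
    refine ⟨fun ⟨i⟩ => FDRep.char_iso i, fun h => by_contra fun hn => ?_⟩
    have := orth V W
    rw [if_neg hn, ← h, orth, if_pos ⟨Iso.refl V⟩] at this
    simp at this
  rw [orth, if_congr iso_iff rfl rfl]

end IsIrreducibleCharacter

section

variable {G : Type} [Group G] [Fintype G] {N : Subgroup G} [hN : N.Normal]
  [DecidablePred fun g => g ∈ N]

theorem inducedChar_apply_coe (φ : N → ℂ) (n : N) :
    inducedChar N φ n = (Fintype.card N : ℂ)⁻¹ * ∑ x : G, φ (MulAut.conjNormal x n) := by
  rw [inducedChar, ← Equiv.sum_comp (Equiv.inv G)]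
  congr 1
  refine Finset.sum_congr rfl fun x _ => ?_
  have hx : x⁻¹⁻¹ * n * x⁻¹ ∈ N := by simpa using hN.conj_mem n n.2 x
  simp only [Equiv.inv_apply, dif_pos hx]
  congr 1
  ext
  simp

theorem inducedChar_comp_conjNormal (φ : N → ℂ) (g : G) :
    inducedChar N (φ ∘ MulAut.conjNormal g) = inducedChar N φ := by
  funext a
  rw [inducedChar, inducedChar]
  congr 1
  refine Fintype.sum_equiv (Equiv.mulRight g⁻¹) _ _ fun x => ?_
  have hconj : (x * g⁻¹)⁻¹ * a * (x * g⁻¹) = g * (x⁻¹ * a * x) * g⁻¹ := by group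
  have hmem : g * (x⁻¹ * a * x) * g⁻¹ ∈ N ↔ x⁻¹ * a * x ∈ N := by
    rw [mul_assoc, hN.mem_comm_iff, inv_mul_cancel_right]
  simp only [Equiv.coe_mulRight, hconj, hmem]
  split_ifs <;> rfl

theorem sum_sum_conjNormal_mul_inv {φ ψ : N → ℂ} (hφ : IsIrreducibleCharacter φ)
    (hψ : IsIrreducibleCharacter ψ) :
    ∑ n : N, (∑ x : G, φ (MulAut.conjNormal x n)) * ψ n⁻¹ =
      Fintype.card N * #{x | φ ∘ MulAut.conjNormal x = ψ} :=
  calc ∑ n : N, (∑ x : G, φ (MulAut.conjNormal x n)) * ψ n⁻¹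
      = ∑ x : G, ∑ n : N, (φ ∘ MulAut.conjNormal x) n * ψ n⁻¹ := by
        simp_rw [Finset.sum_mul]
        exact Finset.sum_comm
    _ = ∑ x : G, if φ ∘ MulAut.conjNormal x = ψ then (Fintype.card N : ℂ) else 0 :=
        Finset.sum_congr rfl fun x _ => (hφ.comp_mulEquiv _).sum_mul_inv hψ
    _ = Fintype.card N * #{x | φ ∘ MulAut.conjNormal x = ψ} := by
        simp [Finset.sum_ite, mul_comm]

end

/-- For a normal subgroup `N ⊴ G` and irreducible complex characters `φ, ψ` of `N`, the
induced characters agree iff `φ` and `ψ` are `G`-conjugate. -/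
theorem inducedChar_eq_iff_conj {G : Type} [Group G] [Fintype G] (N : Subgroup G)
    [hN : N.Normal] [DecidablePred fun g => g ∈ N] (φ ψ : ↥N → ℂ)
    (hφ : ∃ V : FDRep ℂ ↥N, Simple V ∧ V.character = φ)
    (hψ : ∃ V : FDRep ℂ ↥N, Simple V ∧ V.character = ψ) :
    inducedChar N φ = inducedChar N ψ ↔
      ∃ g : G, ∀ n : ↥N, ψ n = φ ⟨g * ↑n * g⁻¹, hN.conj_mem ↑n n.2 g⟩ := by
  constructor
  · intro h
    have hres (n : N) :
        ∑ x : G, φ (MulAut.conjNormal x n) = ∑ x : G, ψ (MulAut.conjNormal x n) := by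
      have := congrFun h n
      rw [inducedChar_apply_coe, inducedChar_apply_coe] at this
      exact mul_left_cancel₀ (by simp) this
    have hcount := sum_sum_conjNormal_mul_inv hφ hψ
    simp_rw [hres, sum_sum_conjNormal_mul_inv hψ hψ,
      mul_right_inj' (Nat.cast_ne_zero.mpr Fintype.card_ne_zero), Nat.cast_inj] at hcount
    have hself : 0 < #{x | ψ ∘ MulAut.conjNormal x = ψ} := Finset.card_pos.mpr ⟨1, by simp⟩
    obtain ⟨g, hg⟩ := Finset.card_pos.mp (hcount ▸ hself)
    exact ⟨g, fun n => (congrFun (Finset.mem_filter.mp hg).2 n).symm⟩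
  · rintro ⟨g, hg⟩
    rw [show ψ = φ ∘ MulAut.conjNormal g from funext hg, inducedChar_comp_conjNormal]
end
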